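/- Let q : ℝ → ℝ be measurable with ∫₀^∞ (1+x)|q(x)| dx < ∞, let λ₁ > 0, and let f be a Jost solution for q. Then, using the principal square root, f(z − λ₁, 0) − 1 + (i/(2 z^{1/2})) ∫₀^∞ (e^{2i(z−λ₁)^{1/2} x} − 1) q(x) dx = O(|z|^{−1}) as |z| → ∞ with z ranging over the closed upper half-plane {z ∈ ℂ | Im z ≥ 0}. -/

import Mathlib

open MeasureTheory Complex Filter Asymptotics

/-- `f` is a Jost solution for the potential `q`: for each `z` in the closed upper half-plane
with `z ≠ 0`, the map `x ↦ e^{-i√z x} f(z,x)` is (a.e. strongly) measurable and bounded on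
`[0,∞)`, and `f(z,·)` satisfies the Volterra integral equation (14.4.7). Here `z ^ (1/2 : ℂ)`
is the principal square root. -/
def IsJost (q : ℝ → ℝ) (f : ℂ → ℝ → ℂ) : Prop :=
  ∀ z : ℂ, 0 ≤ z.im → z ≠ 0 →
    AEStronglyMeasurable
      (fun x : ℝ => Complex.exp (-Complex.I * z ^ (1 / 2 : ℂ) * x) * f z x)
      (volume.restrict (Set.Ici 0)) ∧
    (∃ M : ℝ, ∀ x : ℝ, 0 ≤ x →
      ‖Complex.exp (-Complex.I * z ^ (1 / 2 : ℂ) * x) * f z x‖ ≤ M) ∧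
    ∀ x : ℝ, 0 ≤ x →
      f z x = Complex.exp (Complex.I * z ^ (1 / 2 : ℂ) * x)
        - ∫ t in Set.Ioi x, (z ^ (1 / 2 : ℂ))⁻¹
            * Complex.sin (z ^ (1 / 2 : ℂ) * ((x : ℂ) - (t : ℂ))) * (q t : ℂ) * f z t

/-!
Put `c = √(z - λ₁)` and `m(x) = e^{-icx} f(z - λ₁, x)`. The Volterra equation becomes
`m(x) = 1 + ∫_x^∞ K(t - x) q(t) m(t) dt` with `K(r) = (e^{2icr} - 1)/(2ic)`, and `|K| ≤ 1/|c|`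
because `c` lies in the closed upper half-plane. Since `m` is bounded, a bootstrap on `sup |m|`
gives `|m - 1| ≤ 2‖q‖₁/|c|` once `|c| ≥ 2‖q‖₁`. At `x = 0` this yields
`f(z - λ₁, 0) - 1 = ∫ K q (m - 1) + (2ic)⁻¹ ∫ (e^{2ict} - 1) q`, whose first term is
`O(1/|c|²) = O(1/|z|)`. Replacing `(2ic)⁻¹` by `-i/(2√z)` costs `|c - √z|/(2|c||√z|)`, which is
at most `|λ₁|/(2|c||z|)` because `|c - √z||c + √z| = |λ₁|` and `|c + √z| ≥ |√z|` for two square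
roots in the first quadrant.
-/

open Set

lemma cpow_one_half_re_nonneg (z : ℂ) : 0 ≤ (z ^ (1 / 2 : ℂ)).re := by
  rw [one_div, cpow_inv_two_re]; positivity

lemma cpow_one_half_im_nonneg {z : ℂ} (hz : 0 ≤ z.im) : 0 ≤ (z ^ (1 / 2 : ℂ)).im := by
  rw [one_div, cpow_inv_two_im_eq_sqrt hz]; positivity

lemma cpow_one_half_mul_self (z : ℂ) : z ^ (1 / 2 : ℂ) * z ^ (1 / 2 : ℂ) = z := by
  rw [← sq, one_div]; exact cpow_ofNat_inv_pow z 2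

lemma norm_cpow_one_half_mul_self (z : ℂ) : ‖z ^ (1 / 2 : ℂ)‖ * ‖z ^ (1 / 2 : ℂ)‖ = ‖z‖ := by
  rw [← norm_mul, cpow_one_half_mul_self]

lemma cpow_one_half_ne_zero {z : ℂ} (hz : z ≠ 0) : z ^ (1 / 2 : ℂ) ≠ 0 := fun h => hz <| by
  rw [← cpow_one_half_mul_self z, h, zero_mul]

lemma norm_le_norm_add_of_re_nonneg_of_im_nonneg {a b : ℂ} (ha : 0 ≤ a.re) (ha' : 0 ≤ a.im)
    (hb : 0 ≤ b.re) (hb' : 0 ≤ b.im) : ‖b‖ ≤ ‖a + b‖ := by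
  rw [norm_def, norm_def]
  apply Real.sqrt_le_sqrt
  simp only [normSq_apply, add_re, add_im]
  nlinarith

lemma norm_cpow_one_half_sub_mul_le {w z : ℂ} (hw : 0 ≤ w.im) (hz : 0 ≤ z.im) :
    ‖w ^ (1 / 2 : ℂ) - z ^ (1 / 2 : ℂ)‖ * ‖z ^ (1 / 2 : ℂ)‖ ≤ ‖w - z‖ := calc
  _ ≤ ‖w ^ (1 / 2 : ℂ) - z ^ (1 / 2 : ℂ)‖ * ‖w ^ (1 / 2 : ℂ) + z ^ (1 / 2 : ℂ)‖ := by
    gcongr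
    exact norm_le_norm_add_of_re_nonneg_of_im_nonneg (cpow_one_half_re_nonneg w)
      (cpow_one_half_im_nonneg hw) (cpow_one_half_re_nonneg z) (cpow_one_half_im_nonneg hz)
  _ = ‖w - z‖ := by
    rw [← norm_mul]
    congr 1
    linear_combination cpow_one_half_mul_self w - cpow_one_half_mul_self z

lemma norm_inv_two_I_mul_add_I_div_le {w z : ℂ} (hw : 0 ≤ w.im) (hz : 0 ≤ z.im) (hw0 : w ≠ 0)
    (hz0 : z ≠ 0) :
    ‖(2 * I * w ^ (1 / 2 : ℂ))⁻¹ + I / (2 * z ^ (1 / 2 : ℂ))‖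
      ≤ ‖w - z‖ / (2 * ‖w ^ (1 / 2 : ℂ)‖ * ‖z‖) := by
  set c := w ^ (1 / 2 : ℂ)
  set d := z ^ (1 / 2 : ℂ)
  have hc : c ≠ 0 := cpow_one_half_ne_zero hw0
  have hd : d ≠ 0 := cpow_one_half_ne_zero hz0
  have hd2 : ‖d‖ * ‖d‖ = ‖z‖ := norm_cpow_one_half_mul_self z
  have key : (2 * I * c)⁻¹ + I / (2 * d) = I * (c - d) / (2 * c * d) := by
    rw [mul_inv, mul_inv, inv_I]
    field_simp
    ring
  calc _ = ‖c - d‖ * ‖d‖ / (2 * ‖c‖ * ‖z‖) := by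
        rw [key, ← hd2]
        simp only [norm_div, norm_mul, norm_I, Complex.norm_ofNat]
        field_simp
    _ ≤ _ := by gcongr; exact norm_cpow_one_half_sub_mul_le hw hz

lemma norm_exp_two_I_mul_sub_one_le {s : ℂ} (hs : 0 ≤ s.im) {r : ℝ} (hr : 0 ≤ r) :
    ‖exp (2 * I * s * r) - 1‖ ≤ 2 := by
  have hre : (2 * I * s * r).re ≤ 0 := by
    simp only [mul_re, mul_im, ofReal_re, ofReal_im]; norm_num; positivity
  have := Real.exp_le_one_iff.2 hre
  calc ‖exp (2 * I * s * r) - 1‖ ≤ ‖exp (2 * I * s * r)‖ + ‖(1 : ℂ)‖ := norm_sub_le _ _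
    _ ≤ 2 := by rw [norm_exp, norm_one]; linarith

noncomputable def jostKernel (s : ℂ) (r : ℝ) : ℂ := (exp (2 * I * s * r) - 1) / (2 * I * s)

lemma norm_jostKernel_le {s : ℂ} (hs : 0 ≤ s.im) {r : ℝ} (hr : 0 ≤ r) :
    ‖jostKernel s r‖ ≤ ‖s‖⁻¹ := by
  have hs0 : ‖2 * I * s‖ = 2 * ‖s‖ := by simp
  rw [jostKernel, norm_div, hs0]
  calc _ ≤ 2 / (2 * ‖s‖) := by gcongr; exact norm_exp_two_I_mul_sub_one_le hs hr
    _ = ‖s‖⁻¹ := by rw [div_mul_eq_div_div, div_self two_ne_zero, one_div]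

lemma norm_jostKernel_mul_ofReal_le {s : ℂ} (hs : 0 ≤ s.im) {r : ℝ} (hr : 0 ≤ r) (y : ℝ) :
    ‖jostKernel s r * y‖ ≤ ‖s‖⁻¹ * |y| := by
  rw [norm_mul, norm_real, Real.norm_eq_abs]
  exact mul_le_mul_of_nonneg_right (norm_jostKernel_le hs hr) (abs_nonneg y)

lemma continuous_jostKernel (s : ℂ) : Continuous (jostKernel s) := by
  unfold jostKernel; fun_prop

lemma exp_mul_inv_mul_sin_eq {s : ℂ} (hs : s ≠ 0) (x t : ℝ) :
    exp (-I * s * x) * (s⁻¹ * sin (s * (x - t))) = -(jostKernel s (t - x) * exp (-I * s * t)) := by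
  rw [jostKernel, sin, ofReal_sub,
    show -I * s * x = -(I * s * x) by ring, show -I * s * t = -(I * s * t) by ring,
    show -(s * (x - t)) * I = I * s * t - I * s * x by ring,
    show s * (x - t) * I = I * s * x - I * s * t by ring,
    show 2 * I * s * (t - x) = (I * s * t - I * s * x) + (I * s * t - I * s * x) by ring]
  simp only [exp_neg, exp_sub, exp_add]
  field_simp
  linear_combination (exp (I * s * t) ^ 2 - exp (I * s * x) ^ 2) * I_sq

lemma norm_sub_le_two_mul_of_forall_bound {α E : Type*} [NormedAddCommGroup E] {m : α → E}
    {s : Set α} {a : E} {ε M : ℝ} (hM : ∀ x ∈ s, ‖m x‖ ≤ M) (hε0 : 0 ≤ ε) (hε : ε ≤ 1 / 2)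
    (h : ∀ S, (∀ t ∈ s, ‖m t‖ ≤ S) → ∀ x ∈ s, ‖m x - a‖ ≤ ε * S) :
    ∀ x ∈ s, ‖m x - a‖ ≤ 2 * ε * ‖a‖ := by
  intro x hx
  have hbdd : BddAbove ((fun t => ‖m t‖) '' s) := ⟨M, forall_mem_image.2 hM⟩
  set S := sSup ((fun t => ‖m t‖) '' s)
  have hS : ∀ t ∈ s, ‖m t‖ ≤ S := fun t ht => le_csSup hbdd (mem_image_of_mem _ ht)
  have hS0 : 0 ≤ S := (norm_nonneg _).trans (hS x hx)
  -- the equation bounds `S` by `‖a‖ + ε S`, and `ε ≤ 1/2` closes the loop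
  have hSa : S ≤ ‖a‖ + ε * S := csSup_le ⟨_, mem_image_of_mem _ hx⟩ <|
    forall_mem_image.2 fun t ht => (norm_le_norm_add_norm_sub' (m t) a).trans (by
      gcongr; exact h S hS t ht)
  have hS2 : S ≤ 2 * ‖a‖ := by nlinarith
  calc ‖m x - a‖ ≤ ε * S := h S hS x hx
    _ ≤ 2 * ε * ‖a‖ := by nlinarith [mul_le_mul_of_nonneg_left hS2 hε0]

lemma norm_setIntegral_Ioi_le_mul {E : Type*} [NormedAddCommGroup E] [NormedSpace ℝ E]
    {g : ℝ → E} {p : ℝ → ℝ} {x C : ℝ} (hp : IntegrableOn p (Ioi 0)) (hp0 : ∀ t, 0 ≤ p t)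
    (hx : 0 ≤ x) (hC : 0 ≤ C) (h : ∀ t > x, ‖g t‖ ≤ C * p t) :
    ‖∫ t in Ioi x, g t‖ ≤ C * ∫ t in Ioi 0, p t := calc
  _ ≤ ∫ t in Ioi x, C * p t :=
    norm_integral_le_of_norm_le ((hp.mono_set (Ioi_subset_Ioi hx)).const_mul C)
      (ae_restrict_of_forall_mem measurableSet_Ioi h)
  _ ≤ C * ∫ t in Ioi 0, p t := by
    rw [integral_const_mul]
    exact mul_le_mul_of_nonneg_left
      (setIntegral_mono_set hp (ae_of_all _ hp0) (Ioi_subset_Ioi hx).eventuallyLE) hC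

lemma integrableOn_abs_of_integrableOn_one_add_mul_abs {q : ℝ → ℝ} (hq_meas : Measurable q)
    (hq : IntegrableOn (fun x => (1 + x) * |q x|) (Ioi 0)) :
    IntegrableOn (fun x => |q x|) (Ioi 0) :=
  hq.mono' hq_meas.abs.aestronglyMeasurable <| ae_restrict_of_forall_mem measurableSet_Ioi
    fun x (hx : 0 < x) => by
      rw [Real.norm_eq_abs, abs_abs]
      nlinarith [abs_nonneg (q x)]

noncomputable def jostRatio (f : ℂ → ℝ → ℂ) (w : ℂ) (x : ℝ) : ℂ :=
  exp (-I * w ^ (1 / 2 : ℂ) * x) * f w x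

namespace IsJost

variable {q : ℝ → ℝ} {f : ℂ → ℝ → ℂ} {w : ℂ}

lemma jostRatio_eq (hf : IsJost q f) (hw : 0 ≤ w.im) (hw0 : w ≠ 0) {x : ℝ} (hx : 0 ≤ x) :
    jostRatio f w x
      = 1 + ∫ t in Ioi x, jostKernel (w ^ (1 / 2 : ℂ)) (t - x) * q t * jostRatio f w t := by
  obtain ⟨-, -, heq⟩ := hf w hw hw0
  rw [jostRatio, heq x hx, mul_sub, ← exp_add,
    show -I * w ^ (1 / 2 : ℂ) * x + I * w ^ (1 / 2 : ℂ) * x = 0 by ring, exp_zero,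
    sub_eq_add_neg, ← integral_const_mul, ← integral_neg]
  refine congrArg _ (integral_congr_ae (ae_of_all _ fun t => ?_))
  have := exp_mul_inv_mul_sin_eq (cpow_one_half_ne_zero hw0) x t
  simp only [jostRatio]
  linear_combination -(q t * f w t) * this

lemma norm_jostRatio_sub_one_le (hf : IsJost q f) (hqI : IntegrableOn (fun t => |q t|) (Ioi 0))
    (hw : 0 ≤ w.im) (hw0 : w ≠ 0) (hQ : 2 * ∫ t in Ioi 0, |q t| ≤ ‖w ^ (1 / 2 : ℂ)‖)
    {x : ℝ} (hx : 0 ≤ x) :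
    ‖jostRatio f w x - 1‖ ≤ 2 * (∫ t in Ioi 0, |q t|) / ‖w ^ (1 / 2 : ℂ)‖ := by
  set c := w ^ (1 / 2 : ℂ)
  set Q := ∫ t in Ioi 0, |q t|
  have hc : 0 < ‖c‖ := norm_pos_iff.2 (cpow_one_half_ne_zero hw0)
  obtain ⟨-, ⟨M, hM⟩, -⟩ := hf w hw hw0
  have hbound : ∀ S, (∀ t ∈ Ici 0, ‖jostRatio f w t‖ ≤ S) →
      ∀ y ∈ Ici 0, ‖jostRatio f w y - 1‖ ≤ Q / ‖c‖ * S := by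
    intro S hS y hy
    rw [hf.jostRatio_eq hw hw0 hy, add_sub_cancel_left]
    have hS0 : 0 ≤ S := (norm_nonneg _).trans (hS y hy)
    calc _ ≤ ‖c‖⁻¹ * S * Q := by
          refine norm_setIntegral_Ioi_le_mul hqI (fun _ => abs_nonneg _) hy (by positivity)
            fun t ht => ?_
          calc _ ≤ ‖jostKernel c (t - y) * q t‖ * ‖jostRatio f w t‖ := norm_mul_le _ _
            _ ≤ ‖c‖⁻¹ * |q t| * S := by
              gcongr
              · exact norm_jostKernel_mul_ofReal_le (cpow_one_half_im_nonneg hw)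
                  (sub_nonneg.2 ht.le) _
              · exact hS t (hy.trans ht.le)
            _ = _ := by ring
      _ = Q / ‖c‖ * S := by ring
  have hQ0 : 0 ≤ Q := integral_nonneg fun t => abs_nonneg _
  have := norm_sub_le_two_mul_of_forall_bound (m := jostRatio f w) hM (by positivity)
    (by rw [div_le_iff₀ hc]; linarith) hbound x hx
  rwa [norm_one, mul_one, ← mul_div_assoc] at this

lemma sub_one_eq (hq_meas : Measurable q) (hqI : IntegrableOn (fun t => |q t|) (Ioi 0))
    (hf : IsJost q f) (hw : 0 ≤ w.im) (hw0 : w ≠ 0) :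
    f w 0 - 1
      = (∫ t in Ioi 0, jostKernel (w ^ (1 / 2 : ℂ)) t * q t * (jostRatio f w t - 1))
        + (2 * I * w ^ (1 / 2 : ℂ))⁻¹
          * ∫ t : ℝ in Ioi 0, (exp (2 * I * w ^ (1 / 2 : ℂ) * t) - 1) * q t := by
  set c := w ^ (1 / 2 : ℂ)
  obtain ⟨hmeas, ⟨M, hM⟩, -⟩ := hf w hw hw0
  have hc : 0 ≤ c.im := cpow_one_half_im_nonneg hw
  have hKq : IntegrableOn (fun t => jostKernel c t * q t) (Ioi 0) :=
    (hqI.const_mul ‖c‖⁻¹).mono'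
      ((continuous_jostKernel c).aestronglyMeasurable.mul
        (measurable_ofReal.comp hq_meas).aestronglyMeasurable)
      (ae_restrict_of_forall_mem measurableSet_Ioi fun t ht =>
        norm_jostKernel_mul_ofReal_le hc ht.le _)
  have hKqm : IntegrableOn (fun t => jostKernel c t * q t * jostRatio f w t) (Ioi 0) := by
    refine (hqI.const_mul (‖c‖⁻¹ * M)).mono'
      (hKq.aestronglyMeasurable.mul (hmeas.mono_measure (Measure.restrict_mono
        Ioi_subset_Ici_self le_rfl))) (ae_restrict_of_forall_mem measurableSet_Ioi fun t ht => ?_)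
    calc _ ≤ ‖jostKernel c t * q t‖ * ‖jostRatio f w t‖ := norm_mul_le _ _
      _ ≤ ‖c‖⁻¹ * |q t| * M := by
        gcongr
        · exact norm_jostKernel_mul_ofReal_le hc ht.le _
        · exact hM t ht.le
      _ = _ := by ring
  have h0 := hf.jostRatio_eq hw hw0 le_rfl
  simp only [sub_zero] at h0
  rw [show jostRatio f w 0 = f w 0 by simp [jostRatio]] at h0
  rw [h0, add_sub_cancel_left, ← integral_const_mul, ← integral_add]
  · refine integral_congr_ae (ae_of_all _ fun t => ?_)
    simp only [jostKernel]
    ring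
  · exact Integrable.congr (hKqm.sub hKq) (ae_of_all _ fun t => by simp only [Pi.sub_apply]; ring)
  · exact Integrable.congr hKq (ae_of_all _ fun t => by simp only [jostKernel]; ring)

lemma norm_sub_one_add_le (hq_meas : Measurable q) (hqI : IntegrableOn (fun t => |q t|) (Ioi 0))
    (hf : IsJost q f) (lam : ℝ) {z : ℂ} (hz : 0 ≤ z.im)
    (hzR : 2 * |lam| + 2 + 8 * (∫ t in Ioi 0, |q t|) ^ 2 ≤ ‖z‖) :
    ‖f (z - lam) 0 - 1 + I / (2 * z ^ (1 / 2 : ℂ))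
        * ∫ x : ℝ in Ioi 0, (exp (2 * I * (z - lam) ^ (1 / 2 : ℂ) * x) - 1) * q x‖
      ≤ (4 * (∫ t in Ioi 0, |q t|) ^ 2 + |lam| * ∫ t in Ioi 0, |q t|) * ‖z‖⁻¹ := by
  set Q := ∫ t in Ioi 0, |q t|
  set w := z - lam
  have hQ0 : 0 ≤ Q := integral_nonneg fun t => abs_nonneg _
  have hw : 0 ≤ w.im := by simpa [w] using hz
  have hwz : ‖w - z‖ = |lam| := by simp [w]
  have hzw : ‖z‖ ≤ ‖w‖ + |lam| := by
    simpa [w] using norm_le_norm_add_norm_sub' z w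
  have hw_big : ‖z‖ / 2 + 1 + 4 * Q ^ 2 ≤ ‖w‖ := by linarith
  have hz_pos : 0 < ‖z‖ := by nlinarith [abs_nonneg lam]
  have hw0 : w ≠ 0 := norm_pos_iff.1 (by nlinarith)
  set c := w ^ (1 / 2 : ℂ)
  have hc2 : ‖c‖ * ‖c‖ = ‖w‖ := norm_cpow_one_half_mul_self w
  have hc1 : 1 ≤ ‖c‖ := by nlinarith [norm_nonneg c]
  have hcQ : 2 * Q ≤ ‖c‖ := by nlinarith [norm_nonneg c]
  have hc : 0 ≤ c.im := cpow_one_half_im_nonneg hw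
  rw [hf.sub_one_eq hq_meas hqI hw hw0]
  set A := ∫ x : ℝ in Ioi 0, (exp (2 * I * c * x) - 1) * q x
  set T := ∫ t in Ioi 0, jostKernel c t * q t * (jostRatio f w t - 1)
  have hT : ‖T‖ ≤ ‖c‖⁻¹ * (2 * Q / ‖c‖) * Q := by
    refine norm_setIntegral_Ioi_le_mul hqI (fun _ => abs_nonneg _) le_rfl (by positivity)
      fun t ht => ?_
    calc _ ≤ ‖jostKernel c t * q t‖ * ‖jostRatio f w t - 1‖ := norm_mul_le _ _
      _ ≤ ‖c‖⁻¹ * |q t| * (2 * Q / ‖c‖) := by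
        gcongr
        · exact norm_jostKernel_mul_ofReal_le hc ht.le _
        · exact hf.norm_jostRatio_sub_one_le hqI hw hw0 hcQ ht.le
      _ = _ := by ring
  have hA : ‖A‖ ≤ 2 * Q := by
    refine norm_setIntegral_Ioi_le_mul hqI (fun _ => abs_nonneg _) le_rfl zero_le_two
      fun t ht => ?_
    rw [norm_mul, norm_real, Real.norm_eq_abs]
    exact mul_le_mul_of_nonneg_right (norm_exp_two_I_mul_sub_one_le hc ht.le) (abs_nonneg _)
  have hσ := norm_inv_two_I_mul_add_I_div_le hw hz hw0 (norm_pos_iff.1 hz_pos)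
  rw [hwz] at hσ
  calc _ = ‖T + ((2 * I * c)⁻¹ + I / (2 * z ^ (1 / 2 : ℂ))) * A‖ := by congr 1; ring
    _ ≤ ‖T‖ + ‖(2 * I * c)⁻¹ + I / (2 * z ^ (1 / 2 : ℂ))‖ * ‖A‖ :=
      (norm_add_le _ _).trans_eq (by rw [norm_mul])
    _ ≤ ‖c‖⁻¹ * (2 * Q / ‖c‖) * Q + |lam| / (2 * ‖c‖ * ‖z‖) * (2 * Q) := by gcongr
    _ = 2 * Q ^ 2 / ‖w‖ + |lam| * Q / ‖c‖ * ‖z‖⁻¹ := by rw [← hc2]; field_simp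
    _ ≤ 2 * Q ^ 2 / (‖z‖ / 2) + |lam| * Q / 1 * ‖z‖⁻¹ := by
      gcongr; linarith [sq_nonneg Q]
    _ = _ := by field_simp; ring

end IsJost

theorem statement18_general (q : ℝ → ℝ) (hq_meas : Measurable q)
    (hq : IntegrableOn (fun x => (1 + x) * |q x|) (Set.Ioi 0))
    (lam₁ : ℝ) (f : ℂ → ℝ → ℂ) (hf : IsJost q f) :
    (fun z : ℂ => f (z - (lam₁ : ℂ)) 0 - 1
        + Complex.I / (2 * z ^ (1 / 2 : ℂ))
          * ∫ x in Set.Ioi (0 : ℝ),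
              (Complex.exp (2 * Complex.I * (z - (lam₁ : ℂ)) ^ (1 / 2 : ℂ) * x) - 1) * (q x : ℂ))
      =O[comap (fun z : ℂ => ‖z‖) atTop ⊓ 𝓟 {z : ℂ | 0 ≤ z.im}]
      (fun z : ℂ => ‖z‖⁻¹) := by
  have hqI := integrableOn_abs_of_integrableOn_one_add_mul_abs hq_meas hq
  set Q := ∫ t in Ioi 0, |q t|
  rw [isBigO_iff]
  refine ⟨4 * Q ^ 2 + |lam₁| * Q, ?_⟩
  rw [eventually_inf_principal]
  filter_upwards [tendsto_comap.eventually (eventually_ge_atTop (2 * |lam₁| + 2 + 8 * Q ^ 2))]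
    with z hzR hz
  rw [norm_inv, norm_norm]
  exact hf.norm_sub_one_add_le hq_meas hqI lam₁ hz hzR

theorem statement18 (q : ℝ → ℝ) (hq_meas : Measurable q)
    (hq : IntegrableOn (fun x => (1 + x) * |q x|) (Set.Ioi 0))
    (lam₁ : ℝ) (hlam₁ : 0 < lam₁) (f : ℂ → ℝ → ℂ) (hf : IsJost q f) :
    (fun z : ℂ => f (z - (lam₁ : ℂ)) 0 - 1
        + Complex.I / (2 * z ^ (1 / 2 : ℂ))
          * ∫ x in Set.Ioi (0 : ℝ),
              (Complex.exp (2 * Complex.I * (z - (lam₁ : ℂ)) ^ (1 / 2 : ℂ) * x) - 1) * (q x : ℂ))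
      =O[comap (fun z : ℂ => ‖z‖) atTop ⊓ 𝓟 {z : ℂ | 0 ≤ z.im}]
      (fun z : ℂ => ‖z‖⁻¹) :=
  statement18_general q hq_meas hq lam₁ f hf
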